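/- Let G be a group, and let {A_1, …, A_m} and {B_1, …, B_n} be malnormal collections of subgroups of G. Suppose H = A_i ∩ w⁻¹ B_j w and H' = A_{i'} ∩ w'⁻¹ B_{j'} w' (with w, w' ∈ G) are subgroups such that H ∩ g H' g⁻¹ ≠ {1} for some g ∈ G. Then i = i', j = j', and g H' g⁻¹ = H. Moreover, if in addition i = i', j = j' and w = w', then g ∈ H. -/

import Mathlib

/-!
Conjugating by `w` turns the `B`-parts `w⁻¹ B_j w` and `g w'⁻¹ B_{j'} w' g⁻¹` of `H` and
`g H' g⁻¹` into `B_j` and `(w g w'⁻¹) B_{j'} (w g w'⁻¹)⁻¹`. A nontrivial element of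
`H ∩ g H' g⁻¹` therefore makes both `A_i ∩ g A_{i'} g⁻¹` and `B_j ∩ (w g w'⁻¹) B_{j'} (w g w'⁻¹)⁻¹`
nontrivial, so malnormality gives `i = i'`, `g ∈ A_i`, `j = j'` and `w g w'⁻¹ ∈ B_j`; these
memberships absorb the conjugations, which yields `g H' g⁻¹ = H`, and `g ∈ H` when `w = w'`.
-/

/-- The conjugate subgroup `g K g⁻¹`. -/
def conjSub {G : Type*} [Group G] (g : G) (K : Subgroup G) : Subgroup G :=
  Subgroup.map (MulAut.conj g).toMonoidHom K

section conjSub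

variable {G : Type*} [Group G]

lemma mem_conjSub {g x : G} {K : Subgroup G} : x ∈ conjSub g K ↔ g⁻¹ * x * g ∈ K := by
  rw [conjSub, show (MulAut.conj g).toMonoidHom = (MulAut.conj g : G ≃* G).toMonoidHom from rfl,
    Subgroup.mem_map_equiv]
  simp [MulAut.conj]

lemma conjSub_inf (g : G) (K L : Subgroup G) :
    conjSub g (K ⊓ L) = conjSub g K ⊓ conjSub g L := by
  ext x
  simp only [mem_conjSub, Subgroup.mem_inf]

lemma conjSub_mul (a b : G) (K : Subgroup G) : conjSub (a * b) K = conjSub a (conjSub b K) := by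
  ext x
  simp only [mem_conjSub, mul_inv_rev, mul_assoc]

lemma conjSub_of_mem {g : G} {K : Subgroup G} (hg : g ∈ K) : conjSub g K = K := by
  ext x
  rw [mem_conjSub]
  constructor
  · intro h
    simpa [mul_assoc] using K.mul_mem (K.mul_mem hg h) (K.inv_mem hg)
  · intro h
    exact K.mul_mem (K.mul_mem (K.inv_mem hg) h) hg

lemma conjSub_mul_of_mem {a b : G} {K : Subgroup G} (hb : b ∈ K) :
    conjSub (a * b) K = conjSub a K := by
  rw [conjSub_mul, conjSub_of_mem hb]

lemma conjSub_ne_bot_iff {g : G} {K : Subgroup G} : conjSub g K ≠ ⊥ ↔ K ≠ ⊥ :=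
  (Subgroup.map_eq_bot_iff_of_injective K (MulAut.conj g).injective).not

lemma conjSub_inf_conjSub_ne_bot_iff {a b : G} {K L : Subgroup G} :
    conjSub a K ⊓ conjSub b L ≠ ⊥ ↔ K ⊓ conjSub (a⁻¹ * b) L ≠ ⊥ := by
  rw [← conjSub_ne_bot_iff (g := a) (K := K ⊓ _), conjSub_inf, ← conjSub_mul a (a⁻¹ * b),
    mul_inv_cancel_left]

end conjSub

def IsMalnormalFamily {G ι : Type*} [Group G] (K : ι → Subgroup G) : Prop :=
  ∀ s t : ι, ∀ g : G, K s ⊓ conjSub g (K t) ≠ ⊥ → s = t ∧ g ∈ K s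

lemma IsMalnormalFamily.eq_and_mem_of_conjSub_inf_ne_bot {G ι : Type*} [Group G]
    {K : ι → Subgroup G} (hK : IsMalnormalFamily K) {s t : ι} {a b : G}
    (h : conjSub a (K s) ⊓ conjSub b (K t) ≠ ⊥) : s = t ∧ a⁻¹ * b ∈ K s :=
  hK s t _ (conjSub_inf_conjSub_ne_bot_iff.mp h)

/-- Let `{A_1,…,A_m}` and `{B_1,…,B_n}` be malnormal collections of subgroups of `G`.
If `H = A i ⊓ w⁻¹ (B j) w` and `H' = A i' ⊓ w'⁻¹ (B j') w'` satisfy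
`H ⊓ g H' g⁻¹ ≠ {1}` for some `g ∈ G`, then `i = i'`, `j = j'` and `g H' g⁻¹ = H`.
Moreover, if in addition `i = i'`, `j = j'` and `w = w'`, then `g ∈ H`. -/
theorem meet_malnormal {G : Type*} [Group G] {m n : ℕ}
    (A : Fin m → Subgroup G) (B : Fin n → Subgroup G)
    (hA : ∀ s t : Fin m, ∀ g : G, A s ⊓ conjSub g (A t) ≠ ⊥ → s = t ∧ g ∈ A s)
    (hB : ∀ s t : Fin n, ∀ g : G, B s ⊓ conjSub g (B t) ≠ ⊥ → s = t ∧ g ∈ B s)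
    (i i' : Fin m) (j j' : Fin n) (w w' g : G)
    (hnt : (A i ⊓ conjSub w⁻¹ (B j)) ⊓
      conjSub g (A i' ⊓ conjSub w'⁻¹ (B j')) ≠ ⊥) :
    i = i' ∧ j = j' ∧
      conjSub g (A i' ⊓ conjSub w'⁻¹ (B j')) = A i ⊓ conjSub w⁻¹ (B j) ∧
      (i = i' → j = j' → w = w' → g ∈ A i ⊓ conjSub w⁻¹ (B j)) := by
  rw [conjSub_inf, ← conjSub_mul] at hnt ⊢
  have hA_ne : A i ⊓ conjSub g (A i') ≠ ⊥ :=
    ne_bot_of_le_ne_bot hnt (inf_le_inf inf_le_left inf_le_left)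
  have hB_ne : conjSub w⁻¹ (B j) ⊓ conjSub (g * w'⁻¹) (B j') ≠ ⊥ :=
    ne_bot_of_le_ne_bot hnt (inf_le_inf inf_le_right inf_le_right)
  obtain ⟨rfl, hgA⟩ := hA i i' g hA_ne
  obtain ⟨rfl, hgB⟩ := (show IsMalnormalFamily B from hB).eq_and_mem_of_conjSub_inf_ne_bot hB_ne
  have hconj : conjSub (g * w'⁻¹) (B j) = conjSub w⁻¹ (B j) := by
    rw [← mul_inv_cancel_left w⁻¹ (g * w'⁻¹), conjSub_mul_of_mem hgB]
  refine ⟨rfl, rfl, by rw [conjSub_of_mem hgA, hconj], ?_⟩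
  rintro - - rfl
  refine Subgroup.mem_inf.mpr ⟨hgA, mem_conjSub.mpr ?_⟩
  simpa only [mul_assoc] using hgB
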